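/- For all integers n ≥ 4 and r ≥ 4, the variety C_r(N_n) is reducible in the Zariski topology, i.e., it is not irreducible. -/

import Mathlib

open MvPolynomial Matrix TopologicalSpace

/-- The Zariski topology on `r`-tuples of `n × n` matrices over `k`, identified with
affine space `k^(r·n²)`: the topology generated by complements of hypersurfaces
(its closed sets are exactly the common zero loci of families of polynomials in the
matrix entries). -/
noncomputable def matTupleZariski (k : Type*) [CommRing k] (n r : ℕ) :
    TopologicalSpace (Fin r → Matrix (Fin n) (Fin n) k) :=
  TopologicalSpace.generateFrom
    {U | ∃ p : MvPolynomial (Fin r × Fin n × Fin n) k,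
      U = {x | MvPolynomial.eval (fun q => x q.1 q.2.1 q.2.2) p ≠ 0}}

/-- `C_r(N_n)`: the set of commuting `r`-tuples of nilpotent `n × n` matrices. -/
def nilCommTuples (k : Type*) [Field k] (n r : ℕ) :
    Set (Fin r → Matrix (Fin n) (Fin n) k) :=
  {x | (∀ i, IsNilpotent (x i)) ∧ ∀ i j, x i * x j = x j * x i}

/-!
Suppose `x ∈ C_r(N_n)` and `x₀` is regular, i.e. `x₀ ^ (n - 1) ≠ 0`. Then the vectors
`x₀ʲ v` (`j < n`) form a basis for a suitable `v`, so every matrix commuting with `x₀` is a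
polynomial in `x₀`, and a nilpotent one has no constant term. Thus the `n` matrices
`x₀, x₀², …, x₀ⁿ⁻³, x₁, x₂, x₃` lie in the `(n - 1)`-dimensional span of `x₀, …, x₀ⁿ⁻¹`, and every
`n × n` minor of their entries vanishes. For `x₀` the nilpotent Jordan block of size `n - 2` and
`x₁, x₂, x₃` three matrix units whose products with each other and with `x₀` are all zero, one
such minor equals `1`, while the tuple of regular Jordan blocks has `x₀ ^ (n - 1) ≠ 0`. So
`{x₀ ^ (n - 1) ≠ 0}` and `{minor ≠ 0}` are nonempty open subsets of `C_r(N_n)` with empty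
intersection, which cannot happen in an irreducible space.
-/

open Module Topology

namespace Matrix

section Semiring

variable {R : Type*} [Semiring R] {n : ℕ}

theorem mul_eq_zero_of_apply_ne_zero {l m o : Type*} [Fintype m] {A : Matrix l m R}
    {B : Matrix m o R} (h : ∀ a j b, A a j ≠ 0 → B j b ≠ 0 → False) : A * B = 0 := by
  ext a b
  refine Finset.sum_eq_zero fun j _ => ?_
  by_contra hne
  exact h a j b (left_ne_zero_of_mul hne) (right_ne_zero_of_mul hne)

/-- The nilpotent Jordan block on the first `c` coordinates (on all of them if `n ≤ c`). -/
def shiftMatrix (n c : ℕ) : Matrix (Fin n) (Fin n) R :=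
  of fun i j => if (j : ℕ) = i + 1 ∧ (j : ℕ) < c then 1 else 0

theorem shiftMatrix_apply_ne_zero {c : ℕ} {a b : Fin n}
    (h : (shiftMatrix n c : Matrix (Fin n) (Fin n) R) a b ≠ 0) :
    (b : ℕ) = a + 1 ∧ (b : ℕ) < c := by
  by_contra h'
  simp [shiftMatrix, h'] at h

theorem shiftMatrix_pow_succ_apply (c m : ℕ) (i j : Fin n) :
    (shiftMatrix n c ^ (m + 1) : Matrix (Fin n) (Fin n) R) i j =
      if (j : ℕ) = i + (m + 1) ∧ (j : ℕ) < c then 1 else 0 := by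
  induction m generalizing j with
  | zero => simp [shiftMatrix]
  | succ m ih =>
    rw [pow_succ, mul_apply]
    simp_rw [ih]
    by_cases h : (i : ℕ) + (m + 1) < n
    · rw [Finset.sum_eq_single ⟨i + (m + 1), h⟩]
      · simp only [shiftMatrix, of_apply, true_and]
        split_ifs <;> first | (exfalso; omega) | simp
      · intro l _ hl
        rw [if_neg fun h' => hl (Fin.ext h'.1), zero_mul]
      · simp
    · rw [if_neg (by omega)]
      exact Finset.sum_eq_zero fun l _ => by rw [if_neg (by omega), zero_mul]

theorem shiftMatrix_pow_eq_zero (c : ℕ) :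
    (shiftMatrix n c : Matrix (Fin n) (Fin n) R) ^ n = 0 := by
  rcases n with _ | m
  · exact Subsingleton.elim _ _
  · ext i j
    rw [shiftMatrix_pow_succ_apply, if_neg (by omega), zero_apply]

theorem shiftMatrix_pow_ne_zero [Nontrivial R] {m : ℕ} (hm : m < n) :
    (shiftMatrix n n : Matrix (Fin n) (Fin n) R) ^ m ≠ 0 := by
  intro h
  have h0m := congrFun₂ h ⟨0, by omega⟩ ⟨m, hm⟩
  rcases m with _ | m
  · simp at h0m
  · rw [shiftMatrix_pow_succ_apply, if_pos (by simp only; omega)] at h0m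
    exact one_ne_zero h0m

end Semiring

theorem pow_card_eq_zero_of_isNilpotent {R ι : Type*} [CommRing R] [IsDomain R] [Fintype ι]
    [DecidableEq ι] {N : Matrix ι ι R} (hN : IsNilpotent N) : N ^ Fintype.card ι = 0 := by
  have h := (isNilpotent_charpoly_sub_pow_of_isNilpotent hN).eq_zero
  rw [sub_eq_zero] at h
  simpa [h] using N.aeval_self_charpoly

section Field

variable {k : Type*} [Field k]

theorem det_of_apply_eq_zero_of_finrank_lt {V ι : Type*} [AddCommGroup V] [Module k V]
    [FiniteDimensional k V] [Fintype ι] [DecidableEq ι] {W : Submodule k V}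
    (hW : finrank k W < Fintype.card ι) {w : ι → V} (hw : ∀ a, w a ∈ W) (φ : ι → Dual k V) :
    (of fun a b => φ b (w a)).det = 0 := by
  by_contra h
  have hli : LinearIndependent k fun a => (⟨w a, hw a⟩ : W) :=
    .of_comp (LinearMap.pi φ ∘ₗ W.subtype) (linearIndependent_rows_of_det_ne_zero h)
  exact hW.not_ge hli.fintype_card_le_finrank

variable {n : ℕ} {N : Matrix (Fin n) (Fin n) k}

theorem linearIndependent_pow_mulVec {v : Fin n → k} (hN : N ^ n = 0)
    (hv : N ^ (n - 1) *ᵥ v ≠ 0) : LinearIndependent k fun j : Fin n => N ^ (j : ℕ) *ᵥ v := by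
  rw [Fintype.linearIndependent_iff]
  intro c hc
  by_contra! hne
  obtain ⟨t, ht, hmin⟩ := wellFounded_lt.has_min {j | c j ≠ 0} hne
  -- `t` is the first index with a nonzero coefficient, so `N ^ (n - 1 - t)` kills all other terms
  have hkill : N ^ (n - 1 - t) *ᵥ ∑ j, c j • N ^ (j : ℕ) *ᵥ v = c t • N ^ (n - 1) *ᵥ v := by
    rw [mulVec_sum, Finset.sum_eq_single t]
    · rw [mulVec_smul, mulVec_mulVec, ← pow_add, Nat.sub_add_cancel (by omega)]
    · intro j _ hj
      rcases lt_or_gt_of_ne hj with hlt | hgt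
      · rw [not_not.mp fun h => hmin j h hlt, zero_smul, mulVec_zero]
      · rw [mulVec_smul, mulVec_mulVec, ← pow_add, pow_eq_zero_of_le (by omega) hN, zero_mulVec,
          smul_zero]
    · simp
  rw [hc, mulVec_zero] at hkill
  exact ht ((smul_eq_zero.mp hkill.symm).resolve_right hv)

theorem exists_eq_sum_smul_pow_of_commute [NeZero n] (hN : N ^ n = 0) (hN' : N ^ (n - 1) ≠ 0)
    {y : Matrix (Fin n) (Fin n) k} (hy : Commute y N) :
    ∃ c : Fin n → k, y = ∑ j, c j • N ^ (j : ℕ) := by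
  obtain ⟨v, hv⟩ : ∃ v, N ^ (n - 1) *ᵥ v ≠ 0 := by
    by_contra! h
    exact hN' (ext_iff_mulVec.mpr fun v => by simpa using h v)
  let β := basisOfLinearIndependentOfCardEqFinrank (linearIndependent_pow_mulVec hN hv) (by simp)
  have hβ (j : Fin n) : β j = N ^ (j : ℕ) *ᵥ v := by simp [β]
  set c := β.repr (y *ᵥ v)
  have hP (j : Fin n) : Commute (∑ i, c i • N ^ (i : ℕ)) (N ^ (j : ℕ)) :=
    .sum_left _ _ _ fun i _ => (Commute.pow_pow_self N _ _).smul_left _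
  have hyv : y *ᵥ v = (∑ i, c i • N ^ (i : ℕ)) *ᵥ v := by
    conv_lhs => rw [← β.sum_repr (y *ᵥ v)]
    simp [c, hβ, sum_mulVec, smul_mulVec]
  refine ⟨c, toLin'.injective (β.ext fun j => ?_)⟩
  rw [hβ, toLin'_apply, toLin'_apply, mulVec_mulVec, (hy.pow_right _).eq, ← mulVec_mulVec, hyv,
    mulVec_mulVec, ← (hP j).eq, mulVec_mulVec]

theorem coeff_zero_eq_zero_of_isNilpotent_sum_smul_pow [NeZero n] (hN : N ^ n = 0)
    (hN' : N ^ (n - 1) ≠ 0) (c : Fin n → k) (hP : IsNilpotent (∑ j, c j • N ^ (j : ℕ))) :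
    c 0 = 0 := by
  set P := ∑ j, c j • N ^ (j : ℕ)
  have hPN : P * N ^ (n - 1) = c 0 • N ^ (n - 1) := by
    rw [Finset.sum_mul, Finset.sum_eq_single 0]
    · simp
    · intro j _ hj
      have : 0 < (j : ℕ) := Nat.pos_of_ne_zero (Fin.val_ne_of_ne hj)
      rw [smul_mul_assoc, ← pow_add, pow_eq_zero_of_le (by omega) hN, smul_zero]
    · simp
  have hPm (m : ℕ) : P ^ m * N ^ (n - 1) = c 0 ^ m • N ^ (n - 1) := by
    induction m with
    | zero => simp
    | succ m ih => rw [pow_succ, mul_assoc, hPN, mul_smul_comm, ih, smul_smul, pow_succ']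
  obtain ⟨m, hm⟩ := hP
  have := hPm m
  rw [hm, zero_mul, eq_comm, smul_eq_zero] at this
  exact eq_zero_of_pow_eq_zero (this.resolve_right hN')

theorem mem_span_pow_succ_of_commute_of_isNilpotent (hN : IsNilpotent N)
    (hN' : N ^ (n - 1) ≠ 0) {y : Matrix (Fin n) (Fin n) k} (hy : Commute y N)
    (hyn : IsNilpotent y) :
    y ∈ Submodule.span k (Set.range fun j : Fin (n - 1) => N ^ ((j : ℕ) + 1)) := by
  have : NeZero n := ⟨by rintro rfl; exact hN' (Subsingleton.elim _ _)⟩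
  replace hN : N ^ n = 0 := by simpa using pow_card_eq_zero_of_isNilpotent hN
  obtain ⟨c, rfl⟩ := exists_eq_sum_smul_pow_of_commute hN hN' hy
  have hc0 := coeff_zero_eq_zero_of_isNilpotent_sum_smul_pow hN hN' c hyn
  refine Submodule.sum_mem _ fun j _ => ?_
  rcases eq_or_ne j 0 with rfl | hj
  · simp [hc0]
  · have : 0 < (j : ℕ) := Nat.pos_of_ne_zero (Fin.val_ne_of_ne hj)
    exact Submodule.smul_mem _ _ (Submodule.subset_span
      ⟨⟨j - 1, by omega⟩, congrArg (N ^ ·) (Nat.sub_add_cancel this)⟩)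

end Field

end Matrix

namespace matTupleZariski

variable {k : Type*} [CommRing k] {n r : ℕ}

variable (k n r) in
noncomputable def genericTuple :
    Fin r → Matrix (Fin n) (Fin n) (MvPolynomial (Fin r × Fin n × Fin n) k) :=
  fun i => of fun a b => X (i, a, b)

theorem map_eval_genericTuple (x : Fin r → Matrix (Fin n) (Fin n) k) :
    (fun i => (genericTuple k n r i).map (eval fun q => x q.1 q.2.1 q.2.2)) = x := by
  ext i a b
  simp [genericTuple]

theorem isOpen_setOf_ne_zero_of_eq_eval {F : (Fin r → Matrix (Fin n) (Fin n) k) → k}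
    (p : MvPolynomial (Fin r × Fin n × Fin n) k)
    (hF : ∀ x, eval (fun q => x q.1 q.2.1 q.2.2) p = F x) :
    IsOpen[matTupleZariski k n r] {x | F x ≠ 0} := by
  simp_rw [← hF]
  exact isOpen_generateFrom_of_mem ⟨p, rfl⟩

theorem isOpen_setOf_pow_apply_ne_zero (i : Fin r) (m : ℕ) (a b : Fin n) :
    IsOpen[matTupleZariski k n r] {x | (x i ^ m) a b ≠ 0} :=
  isOpen_setOf_ne_zero_of_eq_eval ((genericTuple k n r i ^ m) a b) fun x => by
    rw [← congrFun (map_eval_genericTuple x) i, ← Matrix.map_pow, map_apply]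

theorem isOpen_setOf_pow_ne_zero (i : Fin r) (m : ℕ) :
    IsOpen[matTupleZariski k n r] {x | x i ^ m ≠ 0} := by
  let := matTupleZariski k n r
  have : {x : Fin r → Matrix (Fin n) (Fin n) k | x i ^ m ≠ 0} =
      ⋃ a, ⋃ b, {x | (x i ^ m) a b ≠ 0} := by
    ext x
    simp [← Matrix.ext_iff]
  rw [this]
  exact isOpen_iUnion fun a => isOpen_iUnion fun b => isOpen_setOf_pow_apply_ne_zero i m a b

end matTupleZariski

namespace nilCommTuples

open matTupleZariski

section Words

variable {n r : ℕ} (hn : 4 ≤ n)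

def wordPos : Fin (n - 3) ⊕ Fin 3 → Fin n × Fin n :=
  Sum.elim (fun b => (⟨0, by omega⟩, ⟨b + 1, by omega⟩))
    ![(⟨n - 2, by omega⟩, ⟨n - 3, by omega⟩), (⟨0, by omega⟩, ⟨n - 1, by omega⟩),
      (⟨n - 2, by omega⟩, ⟨n - 1, by omega⟩)]

variable (hr : 4 ≤ r)

def word {R : Type*} [Semiring R] (x : Fin r → Matrix (Fin n) (Fin n) R) :
    Fin (n - 3) ⊕ Fin 3 → Matrix (Fin n) (Fin n) R :=
  Sum.elim (fun a => x (Fin.castLE hr 0) ^ ((a : ℕ) + 1)) fun i => x (Fin.castLE hr i.succ)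

def wordMinor {R : Type*} [CommRing R] (x : Fin r → Matrix (Fin n) (Fin n) R) : R :=
  (of fun a b => word hr x a (wordPos hn b).1 (wordPos hn b).2).det

theorem map_wordMinor {R S : Type*} [CommRing R] [CommRing S] (f : R →+* S)
    (x : Fin r → Matrix (Fin n) (Fin n) R) :
    f (wordMinor hn hr x) = wordMinor hn hr fun i => (x i).map f := by
  rw [wordMinor, f.map_det]
  congr 1
  ext a b
  rcases a with a | a <;> simp [word, ← Matrix.map_pow]

theorem isOpen_setOf_wordMinor_ne_zero {k : Type*} [CommRing k] :
    IsOpen[matTupleZariski k n r] {x | wordMinor hn hr x ≠ 0} :=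
  isOpen_setOf_ne_zero_of_eq_eval (wordMinor hn hr (genericTuple k n r)) fun x => by
    rw [map_wordMinor, map_eval_genericTuple]

theorem wordMinor_eq_zero_of_pow_ne_zero {k : Type*} [Field k]
    {x : Fin r → Matrix (Fin n) (Fin n) k} (hx : x ∈ nilCommTuples k n r)
    (hreg : x (Fin.castLE hr 0) ^ (n - 1) ≠ 0) : wordMinor hn hr x = 0 := by
  set N := x (Fin.castLE hr 0)
  have hW (a) :
      word hr x a ∈ Submodule.span k (Set.range fun j : Fin (n - 1) => N ^ ((j : ℕ) + 1)) := by
    rcases a with a | i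
    · exact Submodule.subset_span ⟨⟨a, by omega⟩, rfl⟩
    · exact mem_span_pow_succ_of_commute_of_isNilpotent (hx.1 _) hreg (hx.2 _ _) (hx.1 _)
  refine det_of_apply_eq_zero_of_finrank_lt ((finrank_range_le_card _).trans_lt ?_) hW
    fun b => entryLinearMap k k (wordPos hn b).1 (wordPos hn b).2
  simp only [Fintype.card_fin, Fintype.card_sum]
  omega

end Words

section SeparatingTuple

variable (k : Type*) [Field k] {n : ℕ} (hn : 4 ≤ n) (r : ℕ)

def separatingTuple : Fin r → Matrix (Fin n) (Fin n) k := fun i =>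
  if (i : ℕ) = 0 then shiftMatrix n (n - 2)
  else if (i : ℕ) = 1 then single ⟨n - 2, by omega⟩ ⟨n - 3, by omega⟩ 1
  else if (i : ℕ) = 2 then single ⟨0, by omega⟩ ⟨n - 1, by omega⟩ 1
  else if (i : ℕ) = 3 then single ⟨n - 2, by omega⟩ ⟨n - 1, by omega⟩ 1
  else 0

theorem separatingTuple_apply_ne_zero {i : Fin r} (hi : (i : ℕ) ≠ 0) {a b : Fin n}
    (h : separatingTuple k hn r i a b ≠ 0) :
    ((a : ℕ) = 0 ∨ (a : ℕ) = n - 2) ∧ ((b : ℕ) = n - 3 ∨ (b : ℕ) = n - 1) := by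
  simp only [separatingTuple, if_neg hi] at h
  split_ifs at h <;> simp [single_apply, Fin.ext_iff] at h <;> omega

theorem separatingTuple_mul_eq_zero {i j : Fin r} (h : (i : ℕ) ≠ 0 ∨ (j : ℕ) ≠ 0) :
    separatingTuple k hn r i * separatingTuple k hn r j = 0 := by
  refine mul_eq_zero_of_apply_ne_zero fun a l b hi hj => ?_
  by_cases hi0 : (i : ℕ) = 0
  · have := separatingTuple_apply_ne_zero k hn r (h.resolve_left (· hi0)) hj
    simp only [separatingTuple, if_pos hi0] at hi
    have := shiftMatrix_apply_ne_zero hi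
    omega
  by_cases hj0 : (j : ℕ) = 0
  · have := separatingTuple_apply_ne_zero k hn r hi0 hi
    simp only [separatingTuple, if_pos hj0] at hj
    have := shiftMatrix_apply_ne_zero hj
    omega
  have := separatingTuple_apply_ne_zero k hn r hi0 hi
  have := separatingTuple_apply_ne_zero k hn r hj0 hj
  omega

theorem separatingTuple_mem : separatingTuple k hn r ∈ nilCommTuples k n r := by
  refine ⟨fun i => ?_, fun i j => ?_⟩
  · by_cases hi : (i : ℕ) = 0
    · rw [separatingTuple, if_pos hi]
      exact ⟨n, shiftMatrix_pow_eq_zero _⟩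
    · exact ⟨2, by rw [sq, separatingTuple_mul_eq_zero k hn r (.inl hi)]⟩
  · by_cases h : (i : ℕ) = 0 ∧ (j : ℕ) = 0
    · rw [Fin.ext (h.1.trans h.2.symm)]
    · rw [separatingTuple_mul_eq_zero k hn r (by omega),
        separatingTuple_mul_eq_zero k hn r (by omega)]

theorem wordMinor_separatingTuple (hr : 4 ≤ r) :
    wordMinor hn hr (separatingTuple k hn r) = 1 := by
  rw [wordMinor, ← det_one (n := Fin (n - 3) ⊕ Fin 3) (R := k)]
  congr 1
  ext (a | i) (b | j)
  · simp [word, separatingTuple, wordPos, shiftMatrix_pow_succ_apply, one_apply]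
    split_ifs <;> simp_all [Fin.ext_iff]
    omega
  · fin_cases j <;> simp [word, separatingTuple, wordPos, shiftMatrix_pow_succ_apply] <;> omega
  · fin_cases i <;> simp [word, separatingTuple, wordPos, single_apply] <;> omega
  · fin_cases i <;> fin_cases j <;> simp [word, separatingTuple, wordPos, single_apply] <;> omega

end SeparatingTuple

end nilCommTuples

open matTupleZariski nilCommTuples in
theorem nilCommTuples_not_irreducible_general (k : Type*) [Field k]
    (n r : ℕ) (hn : 4 ≤ n) (hr : 4 ≤ r) :
    letI := matTupleZariski k n r
    ¬ IsIrreducible (nilCommTuples k n r) := by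
  let := matTupleZariski k n r
  intro hC
  have hregular : (fun _ => shiftMatrix n n) ∈ nilCommTuples k n r :=
    ⟨fun _ => ⟨n, shiftMatrix_pow_eq_zero n⟩, fun _ _ => rfl⟩
  obtain ⟨x, hxC, hxV, hxU⟩ := hC.isPreirreducible _ _
    (isOpen_setOf_pow_ne_zero (Fin.castLE hr 0) (n - 1))
    (isOpen_setOf_wordMinor_ne_zero hn hr)
    ⟨_, hregular, shiftMatrix_pow_ne_zero (by omega)⟩
    ⟨_, separatingTuple_mem k hn r, by simp [wordMinor_separatingTuple]⟩
  exact hxU (wordMinor_eq_zero_of_pow_ne_zero hn hr hxC hxV)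

/-- For all integers `n ≥ 4` and `r ≥ 4`, the variety `C_r(N_n)` is reducible, i.e. not
irreducible, in the Zariski topology. -/
theorem nilCommTuples_not_irreducible (k : Type*) [Field k] [IsAlgClosed k]
    (n r : ℕ) (hn : 4 ≤ n) (hr : 4 ≤ r) :
    letI := matTupleZariski k n r
    ¬ IsIrreducible (nilCommTuples k n r) :=
  nilCommTuples_not_irreducible_general k n r hn hr
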